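/- Let Σ = {a,b,c} and n ≥ 2. For w ∈ Σ^n define Ψ(w) = w_2 w_1 w_3 w_2 w_4 w_3 ⋯ w_n w_{n−1} (a word of length 2n−2). Then w ∈ (a+b)* a c^+ (i.e. w = u a c^m with u ∈ {a,b}* and m ≥ 1) if and only if Ψ(w) contains ca as a subword but contains none of cca, caa, cb as a subword. -/

import Mathlib

/-!
`psi w` lists the pairs `w_{i+1} w_i`. All four test patterns begin with `c`, so letters `a`, `b`
in front of the first `c` of a word do not affect the test, while a word `c :: R` passes it exactly
when `R ∈ a c*`. Following the recursion of `psi`, a leading `a`/`b` of `w` followed by another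
`a`/`b` is therefore invisible on both sides; otherwise the first `c` of `psi w` comes from a pair
`c x`, and the test forces `x = a` and only `c`'s afterwards, i.e. `w ∈ a c⁺`.
-/

/-- The three-letter alphabet `{a, b, c}`. -/
inductive ABC : Type
  | a | b | c
deriving DecidableEq

/-- The "feedback-sweeping" reading: `psi (w₁ w₂ ⋯ wₙ) = w₂ w₁ w₃ w₂ w₄ w₃ ⋯ wₙ wₙ₋₁`. -/
def psi : List ABC → List ABC
  | x :: y :: rest => y :: x :: psi (y :: rest)
  | _ => []
termination_by w => w.length

open ABC List

def InAbStarACPlus (w : List ABC) : Prop :=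
  ∃ (u : List ABC) (m : ℕ), (∀ x ∈ u, x = a ∨ x = b) ∧ 1 ≤ m ∧ w = u ++ a :: replicate m c

def SubwordTest (P : List ABC) : Prop :=
  [c, a] <+ P ∧ ¬ [c, c, a] <+ P ∧ ¬ [c, a, a] <+ P ∧ ¬ [c, b] <+ P

theorem ABC.ne_c_iff {x : ABC} : x ≠ c ↔ x = a ∨ x = b := by
  cases x <;> simp

theorem mem_psi_cons_cons {x y z : ABC} {w : List ABC} :
    z ∈ psi (x :: y :: w) ↔ z ∈ x :: y :: w := by
  induction w generalizing x y with
  | nil => simp [psi.eq_1, psi.eq_2, or_comm]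
  | cons r w ih =>
    rw [psi.eq_1, mem_cons, mem_cons, ih]
    simp only [mem_cons]
    tauto

theorem not_inAbStarACPlus_nil : ¬ InAbStarACPlus [] := by
  simp [InAbStarACPlus]

theorem inAbStarACPlus_cons {x : ABC} {w : List ABC} :
    InAbStarACPlus (x :: w) ↔
      x ≠ c ∧ (InAbStarACPlus w ∨ x = a ∧ w ≠ [] ∧ ∀ z ∈ w, z = c) := by
  constructor
  · rintro ⟨_ | ⟨z, u⟩, m, hu, hm, hw⟩
    · obtain ⟨rfl, rfl⟩ := cons_eq_cons.mp hw
      refine ⟨by decide, .inr ⟨rfl, ?_, fun z hz => eq_of_mem_replicate hz⟩⟩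
      simpa [← length_eq_zero_iff] using Nat.one_le_iff_ne_zero.mp hm
    · obtain ⟨rfl, rfl⟩ := cons_eq_cons.mp hw
      exact ⟨ne_c_iff.mpr (hu x mem_cons_self),
        .inl ⟨u, m, fun z hz => hu z (mem_cons_of_mem _ hz), hm, rfl⟩⟩
  · rintro ⟨hx, ⟨u, m, hu, hm, rfl⟩ | ⟨rfl, hw, hall⟩⟩
    · refine ⟨x :: u, m, ?_, hm, rfl⟩
      simpa [ne_c_iff.mp hx] using hu
    · refine ⟨[], w.length, by simp, ?_, by simpa using eq_replicate_iff.mpr ⟨rfl, hall⟩⟩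
      exact length_pos_iff.mpr hw

theorem subwordTest_cons_of_ne {x : ABC} {P : List ABC} (hx : x ≠ c) :
    SubwordTest (x :: P) ↔ SubwordTest P := by
  simp [SubwordTest, sublist_cons_iff, Ne.symm hx]

theorem forall_mem_eq_c_iff {Q : List ABC} : (∀ z ∈ Q, z = c) ↔ a ∉ Q ∧ b ∉ Q := by
  constructor
  · intro h
    exact ⟨fun ha => absurd (h a ha) (by decide), fun hb => absurd (h b hb) (by decide)⟩
  · rintro ⟨ha, hb⟩ (_ | _ | _) hz <;> first | rfl | contradiction

theorem subwordTest_cons_c {P : List ABC} :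
    SubwordTest (c :: P) ↔ ∃ Q, P = a :: Q ∧ ∀ z ∈ Q, z = c := by
  rcases P with _ | ⟨_ | _ | _, Q⟩
  · simp [SubwordTest]
  · simp only [SubwordTest, cons_sublist_cons, nil_sublist, singleton_sublist, true_and,
      cons.injEq, exists_eq_left', forall_mem_eq_c_iff]
    constructor
    · rintro ⟨-, ha, hb⟩
      exact ⟨ha, fun h => hb (mem_cons_of_mem _ h)⟩
    · rintro ⟨ha, hb⟩
      exact ⟨fun h => ha ((h.of_cons_of_ne (by decide)).subset (by simp)), ha, by simp [hb]⟩
  · simp [SubwordTest]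
  · simp +contextual [SubwordTest]

theorem subwordTest_psi_iff (w : List ABC) : SubwordTest (psi w) ↔ InAbStarACPlus w := by
  induction w using psi.induct with
  | case1 x y rest ih =>
    rw [psi.eq_1, inAbStarACPlus_cons]
    by_cases hy : y = c
    · subst hy
      have hc : ¬ InAbStarACPlus (c :: rest) := fun h => (inAbStarACPlus_cons.mp h).1 rfl
      rw [subwordTest_cons_c]
      rcases rest with _ | ⟨r, rest⟩ <;> cases x <;> simp [psi.eq_2, mem_psi_cons_cons, hc]
    · rw [subwordTest_cons_of_ne hy]
      by_cases hx : x = c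
      · subst hx
        simp only [subwordTest_cons_c, ne_eq, not_true_eq_false, false_and, iff_false]
        rintro ⟨Q, hQ, hQc⟩
        -- `psi (y :: r :: rest)` begins with `r y`, so `y` would have to be one of the trailing `c`'s
        rcases rest with _ | ⟨r, rest⟩
        · simp [psi.eq_2] at hQ
        · rw [psi.eq_1, cons.injEq] at hQ
          exact hy (hQc y (hQ.2 ▸ mem_cons_self))
      · rw [subwordTest_cons_of_ne hx, ih]
        simp [hx, hy]
  | case2 w hw =>
    rw [psi.eq_2 w hw]
    rcases w with _ | ⟨x, _ | ⟨y, rest⟩⟩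
    · simp [SubwordTest, not_inAbStarACPlus_nil]
    · simp [SubwordTest, inAbStarACPlus_cons, not_inAbStarACPlus_nil]
    · exact (hw x y rest rfl).elim

theorem stmt_5_general (w : List ABC) :
    (∃ (u : List ABC) (m : ℕ), (∀ x ∈ u, x = ABC.a ∨ x = ABC.b) ∧ 1 ≤ m ∧
        w = u ++ ABC.a :: List.replicate m ABC.c) ↔
      ([ABC.c, ABC.a].Sublist (psi w) ∧
        ¬ [ABC.c, ABC.c, ABC.a].Sublist (psi w) ∧
        ¬ [ABC.c, ABC.a, ABC.a].Sublist (psi w) ∧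
        ¬ [ABC.c, ABC.b].Sublist (psi w)) :=
  (subwordTest_psi_iff w).symm

theorem stmt_5 (n : ℕ) (hn : 2 ≤ n) (w : List ABC) (hw : w.length = n) :
    (∃ (u : List ABC) (m : ℕ), (∀ x ∈ u, x = ABC.a ∨ x = ABC.b) ∧ 1 ≤ m ∧
        w = u ++ ABC.a :: List.replicate m ABC.c) ↔
      ([ABC.c, ABC.a].Sublist (psi w) ∧
        ¬ [ABC.c, ABC.c, ABC.a].Sublist (psi w) ∧
        ¬ [ABC.c, ABC.a, ABC.a].Sublist (psi w) ∧
        ¬ [ABC.c, ABC.b].Sublist (psi w)) :=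
  stmt_5_general w
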